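/- Let S be an ensemble and P, P̃ be POVMs. Form the concatenated POVM λP + (1−λ)P̃ = {λΠ_1,...,λΠ_m,(1−λ)Π̃_1,...,(1−λ)Π̃_n} for λ ∈ [0,1]. Then I(S, λP + (1−λ)P̃) = λ I(S,P) + (1−λ) I(S,P̃). -/

import Mathlib

open scoped ComplexOrder
open scoped Matrix

lemma diag_nonneg' {d : ℕ} {M : Matrix (Fin d) (Fin d) ℂ} (hM : M.PosSemidef) (i : Fin d) :
    0 ≤ M i i := by
  exact hM.diag_nonneg

lemma trace_nonneg' {d : ℕ} {M : Matrix (Fin d) (Fin d) ℂ} (hM : M.PosSemidef) :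
    0 ≤ M.trace := by
  unfold Matrix.trace
  exact Finset.sum_nonneg fun i _ => diag_nonneg' hM i

lemma trace_mul_re_nonneg {d : ℕ} {A B : Matrix (Fin d) (Fin d) ℂ}
    (hA : A.PosSemidef) (hB : B.PosSemidef) : 0 ≤ ((A * B).trace).re := by
  open MatrixOrder in obtain ⟨C, hC⟩ :=
    CStarAlgebra.nonneg_iff_eq_star_mul_self.mp (Matrix.nonneg_iff_posSemidef.mpr hA)
  rw [Matrix.star_eq_conjTranspose] at hC
  subst hC
  have h1 : (Cᴴ * (C * B)).trace = (C * B * Cᴴ).trace := Matrix.trace_mul_comm _ _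
  rw [← Matrix.mul_assoc] at h1
  rw [h1]
  have := trace_nonneg' (hB.mul_mul_conjTranspose_same C)
  exact (Complex.le_def.mp this).1

/-- `H(u) = u·log₂ u`. -/
noncomputable def H (u : ℝ) : ℝ := u * Real.logb 2 u

lemma H_mul {c u : ℝ} (hc : 0 ≤ c) (hu : 0 ≤ u) :
    H (c * u) = c * H u + H c * u := by
  rcases eq_or_lt_of_le hc with rfl | hc
  · simp [H]
  rcases eq_or_lt_of_le hu with rfl | hu
  · simp [H]
  unfold H
  rw [Real.logb_mul (ne_of_gt hc) (ne_of_gt hu)]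
  ring

/-- Mutual information of an ensemble `(p, ρ)` and a POVM `P`. -/
noncomputable def mutualInfo {d m : ℕ} {ι : Type*} [Fintype ι]
    (p : Fin m → ℝ) (ρ : Fin m → Matrix (Fin d) (Fin d) ℂ)
    (P : ι → Matrix (Fin d) (Fin d) ℂ) : ℝ :=
  (∑ i, ∑ j, H (p i * ((P j * ρ i).trace).re))
    - (∑ i, H (∑ j, p i * ((P j * ρ i).trace).re))
    - (∑ j, H (∑ i, p i * ((P j * ρ i).trace).re))

/-- Lemma 10: the mutual information of the concatenated POVM
`λP + (1−λ)P̃ = {λΠ₁,...,λΠₘ,(1−λ)Π̃₁,...,(1−λ)Π̃ₙ}` is the convex combination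
of the mutual informations. -/
theorem stmt12 (d m nP nPt : ℕ)
    (p : Fin m → ℝ) (hp : ∀ i, 0 ≤ p i) (hp1 : ∑ i, p i = 1)
    (ρ : Fin m → Matrix (Fin d) (Fin d) ℂ)
    (hρ : ∀ i, (ρ i).PosSemidef ∧ (ρ i).trace = 1)
    (P : Fin nP → Matrix (Fin d) (Fin d) ℂ)
    (Pt : Fin nPt → Matrix (Fin d) (Fin d) ℂ)
    (hP : ∀ j, (P j).PosSemidef) (hPsum : ∑ j, P j = 1)
    (hPt : ∀ j, (Pt j).PosSemidef) (hPtsum : ∑ j, Pt j = 1)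
    (l : ℝ) (hl : l ∈ Set.Icc (0:ℝ) 1) :
    mutualInfo p ρ (Sum.elim (fun j => l • P j) (fun j => (1 - l) • Pt j))
      = l * mutualInfo p ρ P + (1 - l) * mutualInfo p ρ Pt := by
  obtain ⟨hl0, hl1⟩ := hl
  have hl1' : (0:ℝ) ≤ 1 - l := by linarith
  set a : Fin m → Fin nP → ℝ := fun i j => p i * ((P j * ρ i).trace).re with ha_def
  set b : Fin m → Fin nPt → ℝ := fun i j => p i * ((Pt j * ρ i).trace).re with hb_def
  have ha : ∀ i j, 0 ≤ a i j := fun i j =>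
    mul_nonneg (hp i) (trace_mul_re_nonneg (hP j) (hρ i).1)
  have hb : ∀ i j, 0 ≤ b i j := fun i j =>
    mul_nonneg (hp i) (trace_mul_re_nonneg (hPt j) (hρ i).1)
  have hrowA : ∀ i, ∑ j, a i j = p i := by
    intro i
    have h1 : ∑ j, (P j * ρ i).trace = 1 := by
      rw [← Matrix.trace_sum, ← Finset.sum_mul, hPsum, Matrix.one_mul, (hρ i).2]
    have h2 : ∑ j, ((P j * ρ i).trace).re = 1 := by
      have := congrArg Complex.re h1
      simpa [Complex.re_sum] using this
    simp only [ha_def, ← Finset.mul_sum, h2, mul_one]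
  have hrowB : ∀ i, ∑ j, b i j = p i := by
    intro i
    have h1 : ∑ j, (Pt j * ρ i).trace = 1 := by
      rw [← Matrix.trace_sum, ← Finset.sum_mul, hPtsum, Matrix.one_mul, (hρ i).2]
    have h2 : ∑ j, ((Pt j * ρ i).trace).re = 1 := by
      have := congrArg Complex.re h1
      simpa [Complex.re_sum] using this
    simp only [hb_def, ← Finset.mul_sum, h2, mul_one]
  have htotA : ∑ j, ∑ i, a i j = 1 := by
    rw [Finset.sum_comm]
    simp only [hrowA]; exact hp1
  have htotB : ∑ j, ∑ i, b i j = 1 := by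
    rw [Finset.sum_comm]
    simp only [hrowB]; exact hp1
  have hLa : ∀ i j, p i * (((l • P j) * ρ i).trace).re = l * a i j := by
    intro i j
    rw [Matrix.smul_mul, Matrix.trace_smul, Complex.smul_re]
    simp only [ha_def, smul_eq_mul]; ring
  have hLb : ∀ i j, p i * ((((1 - l) • Pt j) * ρ i).trace).re = (1 - l) * b i j := by
    intro i j
    rw [Matrix.smul_mul, Matrix.trace_smul, Complex.smul_re]
    simp only [hb_def, smul_eq_mul]; ring
  -- first term
  have E1 : ∑ i, ∑ j, H (l * a i j)
      = l * (∑ i, ∑ j, H (a i j)) + H l := by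
    have step : ∀ i, ∑ j, H (l * a i j) = l * (∑ j, H (a i j)) + H l * p i := by
      intro i
      rw [Finset.sum_congr rfl fun j _ => H_mul hl0 (ha i j),
        Finset.sum_add_distrib, ← Finset.mul_sum, ← Finset.mul_sum, hrowA]
    rw [Finset.sum_congr rfl fun i _ => step i, Finset.sum_add_distrib,
      ← Finset.mul_sum, ← Finset.mul_sum, hp1, mul_one]
  have E1b : ∑ i, ∑ j, H ((1 - l) * b i j)
      = (1 - l) * (∑ i, ∑ j, H (b i j)) + H (1 - l) := by
    have step : ∀ i, ∑ j, H ((1 - l) * b i j) = (1 - l) * (∑ j, H (b i j)) + H (1 - l) * p i := by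
      intro i
      rw [Finset.sum_congr rfl fun j _ => H_mul hl1' (hb i j),
        Finset.sum_add_distrib, ← Finset.mul_sum, ← Finset.mul_sum, hrowB]
    rw [Finset.sum_congr rfl fun i _ => step i, Finset.sum_add_distrib,
      ← Finset.mul_sum, ← Finset.mul_sum, hp1, mul_one]
  -- middle term
  have Hmid : ∀ i, (∑ j, l * a i j) + (∑ j, (1 - l) * b i j) = p i := by
    intro i
    rw [show ∑ j, l * a i j = l * ∑ j, a i j from (Finset.mul_sum _ _ _).symm,
      show ∑ j, (1 - l) * b i j = (1 - l) * ∑ j, b i j from (Finset.mul_sum _ _ _).symm,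
      hrowA, hrowB]
    ring
  -- third term
  have E3 : ∑ j, H (∑ i, l * a i j) = l * (∑ j, H (∑ i, a i j)) + H l := by
    have step : ∀ j : Fin nP, H (∑ i, l * a i j)
        = l * H (∑ i, a i j) + H l * (∑ i, a i j) := by
      intro j
      rw [← Finset.mul_sum]
      exact H_mul hl0 (Finset.sum_nonneg fun i _ => ha i j)
    rw [Finset.sum_congr rfl fun j _ => step j, Finset.sum_add_distrib,
      ← Finset.mul_sum, ← Finset.mul_sum, htotA, mul_one]
  have E3b : ∑ j, H (∑ i, (1 - l) * b i j) = (1 - l) * (∑ j, H (∑ i, b i j)) + H (1 - l) := by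
    have step : ∀ j : Fin nPt, H (∑ i, (1 - l) * b i j)
        = (1 - l) * H (∑ i, b i j) + H (1 - l) * (∑ i, b i j) := by
      intro j
      rw [← Finset.mul_sum]
      exact H_mul hl1' (Finset.sum_nonneg fun i _ => hb i j)
    rw [Finset.sum_congr rfl fun j _ => step j, Finset.sum_add_distrib,
      ← Finset.mul_sum, ← Finset.mul_sum, htotB, mul_one]
  have MP : mutualInfo p ρ P
      = (∑ i, ∑ j, H (a i j)) - (∑ i, H (p i)) - (∑ j, H (∑ i, a i j)) := by
    unfold mutualInfo
    rw [Finset.sum_congr rfl fun i (_ : i ∈ Finset.univ) => congrArg H (hrowA i)]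
  have MPt : mutualInfo p ρ Pt
      = (∑ i, ∑ j, H (b i j)) - (∑ i, H (p i)) - (∑ j, H (∑ i, b i j)) := by
    unfold mutualInfo
    rw [Finset.sum_congr rfl fun i (_ : i ∈ Finset.univ) => congrArg H (hrowB i)]
  rw [MP, MPt]
  unfold mutualInfo
  simp only [Fintype.sum_sum_type, Sum.elim_inl, Sum.elim_inr, hLa, hLb]
  simp only [Hmid]
  rw [Finset.sum_add_distrib, E1, E1b, E3, E3b]
  ring
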